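/- The mutual information I(f;y) for discrete y is bounded above by U_1 = Σ_a Σ_{b≠a} p(y_a) p(y_b) D_kl[p(f|y_a) ‖ p(f|y_b)], i.e., the average pairwise KL divergence between class-conditional distributions. -/

import Mathlib

/-! Rewriting the mutual information as `∑_a p(y_a) E_{p(f|y_a)}[log (p(f|y_a) / p(f))]`, concavity
of `log` bounds `-log p(f) = -log ∑_b p(y_b) p(f|y_b)` by `-∑_b p(y_b) log p(f|y_b)`. This turns
each summand into `∑_b p(y_b) log (p(f|y_a) / p(f|y_b))`, whose expectation is the weighted sum of
the divergences `D_kl[p(f|y_a) ‖ p(f|y_b)]`; the diagonal divergences vanish. -/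

open Finset

theorem Real.sum_mul_log_le_log_sum_mul {ι : Type*} (s : Finset ι) {w x : ι → ℝ}
    (hw : ∀ i ∈ s, 0 ≤ w i) (hw1 : ∑ i ∈ s, w i = 1) (hx : ∀ i ∈ s, 0 < x i) :
    ∑ i ∈ s, w i * Real.log (x i) ≤ Real.log (∑ i ∈ s, w i * x i) := by
  simpa only [smul_eq_mul] using strictConcaveOn_log_Ioi.concaveOn.le_map_sum hw hw1 hx

theorem Real.log_div_sum_mul_le_sum_mul_log_div {ι : Type*} [Fintype ι] {w x : ι → ℝ}
    (hw : ∀ i, 0 ≤ w i) (hw1 : ∑ i, w i = 1) (hx : ∀ i, 0 < x i) (j : ι) :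
    Real.log (x j / ∑ i, w i * x i) ≤ ∑ i, w i * Real.log (x j / x i) := by
  obtain ⟨k, -, hk⟩ : ∃ k ∈ univ, 0 < w k  := exists_lt_of_sum_lt (by simp [hw1])
  have hmix : 0 < ∑ i, w i * x i :=
    sum_pos' (fun i _ => mul_nonneg (hw i) (hx i).le) ⟨k, mem_univ k, mul_pos hk (hx k)⟩
  have hjensen := Real.sum_mul_log_le_log_sum_mul univ (fun i _ => hw i) hw1 (fun i _ => hx i)
  calc Real.log (x j / ∑ i, w i * x i)
      = Real.log (x j) - Real.log (∑ i, w i * x i) := Real.log_div (hx j).ne' hmix.ne'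
    _ ≤ (∑ i, w i) * Real.log (x j) - ∑ i, w i * Real.log (x i) := by rw [hw1]; linarith
    _ = ∑ i, w i * Real.log (x j / x i) := by
      simp only [sum_mul, ← sum_sub_distrib, ← mul_sub, Real.log_div (hx j).ne' (hx _).ne']

theorem mutual_information_le_pairwise_kl_general
    {F Y : Type*} [Fintype F] [Fintype Y] [DecidableEq Y]
    (py : Y → ℝ) (hpy : ∀ a, 0 < py a) (hpysum : ∑ a, py a = 1)
    (pf : Y → F → ℝ) (hpf : ∀ a f, 0 < pf a f) :
    ∑ a, ∑ f, (py a * pf a f) *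
        Real.log ((py a * pf a f) / ((∑ b, py b * pf b f) * py a)) ≤
      ∑ a, ∑ b ∈ Finset.univ.erase a,
        py a * py b * ∑ f, pf a f * Real.log (pf a f / pf b f) := by
  calc ∑ a, ∑ f, (py a * pf a f) * Real.log ((py a * pf a f) / ((∑ b, py b * pf b f) * py a))
      = ∑ a, ∑ f, py a * pf a f * Real.log (pf a f / ∑ b, py b * pf b f) := by
        refine sum_congr rfl fun a _ => sum_congr rfl fun f _ => ?_
        rw [mul_comm _ (py a), mul_div_mul_left _ _ (hpy a).ne']
    _ ≤ ∑ a, ∑ f, py a * pf a f * ∑ b, py b * Real.log (pf a f / pf b f) := by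
        gcongr with a _ f _
        · exact (mul_pos (hpy a) (hpf a f)).le
        · exact Real.log_div_sum_mul_le_sum_mul_log_div (fun b => (hpy b).le) hpysum
            (fun b => hpf b f) a
    _ = ∑ a, ∑ b, py a * py b * ∑ f, pf a f * Real.log (pf a f / pf b f) := by
        simp only [mul_sum]
        exact sum_congr rfl fun a _ => sum_comm.trans <|
          sum_congr rfl fun b _ => sum_congr rfl fun f _ => by ring
    _ = ∑ a, ∑ b ∈ univ.erase a, py a * py b * ∑ f, pf a f * Real.log (pf a f / pf b f) := by
        refine sum_congr rfl fun a _ => (sum_erase _ ?_).symm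
        simp [div_self (hpf a _).ne']

/-- The mutual information `I(f;y)` for discrete `y` is bounded above by
`U₁ = ∑_a ∑_{b ≠ a} p(y_a) p(y_b) D_kl[p(f|y_a) ‖ p(f|y_b)]`. -/
theorem mutual_information_le_pairwise_kl
    {F Y : Type*} [Fintype F] [Fintype Y] [DecidableEq Y]
    (py : Y → ℝ) (hpy : ∀ a, 0 < py a) (hpysum : ∑ a, py a = 1)
    (pf : Y → F → ℝ) (hpf : ∀ a f, 0 < pf a f) (hpfsum : ∀ a, ∑ f, pf a f = 1) :
    ∑ a, ∑ f, (py a * pf a f) *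
        Real.log ((py a * pf a f) / ((∑ b, py b * pf b f) * py a)) ≤
      ∑ a, ∑ b ∈ Finset.univ.erase a,
        py a * py b * ∑ f, pf a f * Real.log (pf a f / pf b f) :=
  mutual_information_le_pairwise_kl_general py hpy hpysum pf hpf
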